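/- If G is a connected cubic graph and H is an induced 2-regular subgraph of G with components (induced cycles) C_1, ..., C_t of orders ℓ_1, ..., ℓ_t such that no vertex of G outside N_G[V(H)] is adjacent to a vertex of H, and G − N_G[V(H)] is a forest, then the independence number of G satisfies α(G) ≥ (n(G) − Σℓ_i − t)/2. -/

import Mathlib

open SimpleGraph

/-- `c` is an induced cycle of `G`. -/
def IsInducedCycle {V : Type*} (G : SimpleGraph V) {v : V} (c : G.Walk v v) : Prop :=
  c.IsCycle ∧ ∀ x ∈ c.support, ∀ y ∈ c.support, G.Adj x y → s(x, y) ∈ c.edges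

/-- `G` has no induced cycle of length more than `k`. -/
def KChordal {V : Type*} (G : SimpleGraph V) (k : ℕ) : Prop :=
  ∀ (v : V) (c : G.Walk v v), IsInducedCycle G c → c.length ≤ k

/-- The induced subgraph on `s` is 2-regular. -/
def TwoRegularInduced {V : Type*} (G : SimpleGraph V) (s : Set V) : Prop :=
  ∀ v ∈ s, (s ∩ G.neighborSet v).ncard = 2

/-!
Outside `N` the graph is a forest, hence 2-colourable, so it has an independent set containing
half of its vertices. Removing one vertex from each of the `t` cycles of `H` leaves disjoint paths,
which give an independent set of at least `(|s| - t) / 2` vertices of `s`. No edge joins `s` to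
the complement of `N`, so the union of the two sets is independent; and as every vertex of `s`
has exactly one neighbour outside `s`, `|N| ≤ 2|s|`, which yields the bound.
-/

namespace SimpleGraph

variable {V W : Type*} {G : SimpleGraph V} {H : SimpleGraph W}

lemma IsIndepSet.image_val {A : Set V} {I : Set A} (h : (G.induce A).IsIndepSet I) :
    G.IsIndepSet (Subtype.val '' I) :=
  Set.Pairwise.image h

lemma exists_isIndepSet_two_mul_ncard_ge [Finite W] (h : H.Colorable 2) :
    ∃ I, H.IsIndepSet I ∧ Nat.card W ≤ 2 * I.ncard := by
  obtain ⟨C⟩ := h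
  have hcompl : (C.colorClass 0)ᶜ = C.colorClass 1 := by
    ext v
    simp only [Set.mem_compl_iff, Coloring.colorClass, Set.mem_ofPred_eq]
    omega
  have hsum := Set.ncard_add_ncard_compl (C.colorClass 0)
  rw [hcompl] at hsum
  rcases le_total (C.colorClass 0).ncard (C.colorClass 1).ncard with h | h
  · exact ⟨_, C.isIndepSet_colorClass 1, by omega⟩
  · exact ⟨_, C.isIndepSet_colorClass 0, by omega⟩

lemma Walk.IsCycle.exists_verts_toSubgraph_eq_supp [H.LocallyFinite] (hH : H.IsCycles)
    {u : W} {p : H.Walk u u} (hp : p.IsCycle) :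
    ∃ K : H.ConnectedComponent, p.toSubgraph.verts = K.supp :=
  p.toSubgraph_connected.exists_verts_eq_connectedComponentSupp
    fun _ hv w hadj ↦ (hp.adj_toSubgraph_iff_of_isCycles hH hv w).mpr hadj

lemma IsCycles.isAcyclic_induce_compl [H.LocallyFinite] (hH : H.IsCycles) {R : Set W}
    (hR : ∀ K : H.ConnectedComponent, (K.supp ∩ R).Nonempty) : (H.induce Rᶜ).IsAcyclic := by
  intro v c hc
  set c' := c.map (Embedding.induce Rᶜ).toHom
  have hc' : c'.IsCycle :=
    (Walk.isCycle_map_iff_of_injective (Embedding.induce (G := H) Rᶜ).injective).mpr hc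
  obtain ⟨K, hK⟩ := hc'.exists_verts_toSubgraph_eq_supp hH
  obtain ⟨r, hrK, hrR⟩ := hR K
  rw [← hK, Walk.mem_verts_toSubgraph, Walk.support_map, List.mem_map] at hrK
  obtain ⟨x, -, rfl⟩ := hrK
  exact x.2 hrR

lemma IsCycles.exists_isIndepSet [Finite W] (hH : H.IsCycles) :
    ∃ I, H.IsIndepSet I ∧ Nat.card W ≤ 2 * I.ncard + Nat.card H.ConnectedComponent := by
  have := Fintype.ofFinite W
  classical
  choose r hr using fun K : H.ConnectedComponent ↦ K.nonempty_supp
  have hR : ∀ K : H.ConnectedComponent, (K.supp ∩ Set.range r).Nonempty :=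
    fun K ↦ ⟨r K, hr K, K, rfl⟩
  obtain ⟨J, hJ, hcard⟩ :=
    exists_isIndepSet_two_mul_ncard_ge (hH.isAcyclic_induce_compl hR).colorable_two
  refine ⟨_, hJ.image_val, ?_⟩
  have hrange : (Set.range r).ncard ≤ Nat.card H.ConnectedComponent := by
    rw [← Nat.card_coe_set_eq]
    exact Finite.card_range_le r
  rw [Nat.card_coe_set_eq, Set.ncard_compl] at hcard
  rw [Set.ncard_image_of_injective _ Subtype.val_injective]
  omega

lemma _root_.TwoRegularInduced.isCycles_induce {s : Set V} (h : TwoRegularInduced G s) :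
    (G.induce s).IsCycles := by
  intro v _
  rw [← h v v.2, ← Set.ncard_preimage_of_injective_subset_range Subtype.val_injective
    (Subtype.range_coe.superset.trans' Set.inter_subset_left)]
  congr 1
  ext w
  simp

lemma ncard_union_neighbors_le [Finite V] {s : Set V}
    (h : ∀ x ∈ s, (G.neighborSet x \ s).ncard ≤ 1) :
    (s ∪ {w | ∃ x ∈ s, G.Adj x w}).ncard ≤ 2 * s.ncard := by
  have hsub : ∀ x ∈ s, ∃ a, ∀ w ∈ G.neighborSet x \ s, w = a := by
    intro x hx
    rcases (Set.ncard_le_one_iff_subsingleton.mp (h x hx)).eq_empty_or_singleton with he | ⟨a, ha⟩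
    · exact ⟨x, by simp [he]⟩
    · exact ⟨a, by simp [ha]⟩
  choose! f hf using hsub
  have hcover : s ∪ {w | ∃ x ∈ s, G.Adj x w} ⊆ s ∪ f '' s := by
    rintro w (hw | ⟨x, hx, hadj⟩)
    · exact Or.inl hw
    · by_cases hws : w ∈ s
      · exact Or.inl hws
      · exact Or.inr ⟨x, hx, (hf x hx w ⟨hadj, hws⟩).symm⟩
  calc _ ≤ (s ∪ f '' s).ncard := Set.ncard_le_ncard hcover
    _ ≤ s.ncard + (f '' s).ncard := Set.ncard_union_le _ _
    _ ≤ 2 * s.ncard := by linarith [Set.ncard_image_le (f := f) (s := s)]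

lemma IsIndepSet.union {A B : Set V} (hA : G.IsIndepSet A) (hB : G.IsIndepSet B)
    (hAB : ∀ x ∈ A, ∀ y ∈ B, ¬ G.Adj x y) : G.IsIndepSet (A ∪ B) :=
  Set.pairwise_union.mpr
    ⟨hA, hB, fun x hx y hy _ ↦ ⟨hAB x hx y hy, fun h ↦ hAB x hx y hy h.symm⟩⟩

lemma IsIndepSet.forall_not_adj {A : Set V} (hA : G.IsIndepSet A) :
    ∀ x ∈ A, ∀ y ∈ A, ¬ G.Adj x y := fun _ hx _ hy hadj ↦
  hA hx hy hadj.ne hadj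

end SimpleGraph

theorem stmt19_general {V : Type*} [Fintype V] (G : SimpleGraph V)
    (hcubic : ∀ v : V, (G.neighborSet v).ncard = 3)
    (s : Set V) (h2 : TwoRegularInduced G s)
    (N : Set V) (hN : N = s ∪ {w | ∃ x ∈ s, G.Adj x w})
    (hout : ∀ v ∉ N, ∀ x ∈ s, ¬ G.Adj v x)
    (hforest : ∀ (v : ↥(Nᶜ : Set V)) (c : (G.induce (Nᶜ : Set V)).Walk v v), ¬ c.IsCycle) :
    ∃ I : Set V, (∀ x ∈ I, ∀ y ∈ I, ¬ G.Adj x y) ∧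
      ((Fintype.card V : ℝ) - (s.ncard : ℝ) -
          (Nat.card (G.induce s).ConnectedComponent : ℝ)) / 2 ≤ (I.ncard : ℝ) := by
  have hNcard : N.ncard ≤ 2 * s.ncard := hN ▸ ncard_union_neighbors_le fun x hx ↦ by
    have := Set.ncard_inter_add_ncard_sdiff_eq_ncard (G.neighborSet x) s
    rw [Set.inter_comm, h2 x hx, hcubic x] at this
    omega
  obtain ⟨J₁, hJ₁, hcard₁⟩ := exists_isIndepSet_two_mul_ncard_ge (IsAcyclic.colorable_two hforest)
  obtain ⟨J₂, hJ₂, hcard₂⟩ := h2.isCycles_induce.exists_isIndepSet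
  have hsN : s ⊆ N := hN ▸ Set.subset_union_left
  have hcross : ∀ x ∈ Subtype.val '' J₁, ∀ y ∈ Subtype.val '' J₂, ¬ G.Adj x y := by
    rintro _ ⟨x, -, rfl⟩ _ ⟨y, -, rfl⟩
    exact hout x x.2 y y.2
  refine ⟨_, (hJ₁.image_val.union hJ₂.image_val hcross).forall_not_adj, ?_⟩
  have hdisj : Disjoint (Subtype.val '' J₁) (Subtype.val '' J₂) := by
    rw [Set.disjoint_left]
    rintro _ ⟨x, -, rfl⟩ ⟨y, -, hyx⟩
    exact x.2 (hyx ▸ hsN y.2)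
  rw [Set.ncard_union_eq hdisj, Set.ncard_image_of_injective _ Subtype.val_injective,
    Set.ncard_image_of_injective _ Subtype.val_injective]
  rw [Nat.card_coe_set_eq] at hcard₁ hcard₂
  have htotal : N.ncard + Nᶜ.ncard = Fintype.card V := by
    rw [Set.ncard_add_ncard_compl, Nat.card_eq_fintype_card]
  have key : Fintype.card V ≤ s.ncard + Nat.card (G.induce s).ConnectedComponent +
      2 * (J₁.ncard + J₂.ncard) := by omega
  have := (Nat.cast_le (α := ℝ)).mpr key
  push_cast at this ⊢
  linarith

theorem stmt19 {V : Type*} [Fintype V] (G : SimpleGraph V)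
    (hconn : G.Connected) (hcubic : ∀ v : V, (G.neighborSet v).ncard = 3)
    (s : Set V) (h2 : TwoRegularInduced G s)
    (N : Set V) (hN : N = s ∪ {w | ∃ x ∈ s, G.Adj x w})
    (hout : ∀ v ∉ N, ∀ x ∈ s, ¬ G.Adj v x)
    (hforest : ∀ (v : ↥(Nᶜ : Set V)) (c : (G.induce (Nᶜ : Set V)).Walk v v), ¬ c.IsCycle) :
    ∃ I : Set V, (∀ x ∈ I, ∀ y ∈ I, ¬ G.Adj x y) ∧
      ((Fintype.card V : ℝ) - (s.ncard : ℝ) -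
          (Nat.card (G.induce s).ConnectedComponent : ℝ)) / 2 ≤ (I.ncard : ℝ) :=
  stmt19_general G hcubic s h2 N hN hout hforest
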